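/- The area of one of Foss–Zuyev's seven petals of radius r equals 2r²(π/7 + sin(π/7)cos(3π/7)). Here the petal is the intersection of the two disks of radius r centered at the polar points (r, 0) and (r, 2π/7) with the angular sector between the rays φ = 0 and φ = 2π/7. -/

import Mathlib

/-!
In polar coordinates `z = ρ e^{iφ}`, the disk of radius `r` centred at `r e^{iβ}` is
`ρ ≤ 2 r cos (φ - β)` (Thales). Hence the petal of opening `θ = 2α` is
`{0 ≤ φ ≤ θ, 0 < ρ ≤ 2 r min (cos φ, cos (θ - φ))}`, up to the origin, and its area is
`∫₀^θ 2 r² min (cos φ, cos (θ - φ))² dφ`. The reflection `φ ↦ θ - φ` folds this to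
`4 r² ∫_α^{2α} cos² φ dφ = 2 r² (α + sin α cos 3α)`.
-/

open MeasureTheory Real Complex Set

theorem normSq_polarCoord_symm_sub (r ρ φ β : ℝ) :
    normSq (Complex.polarCoord.symm (ρ, φ) - r * exp (β * I)) =
      ρ ^ 2 + r ^ 2 - 2 * ρ * r * Real.cos (φ - β) := by
  rw [Complex.polarCoord_symm_apply, exp_mul_I, ← ofReal_cos, ← ofReal_sin, Real.cos_sub]
  simp only [normSq_apply, sub_re, sub_im, mul_re, mul_im, add_re, add_im, ofReal_re,
    ofReal_im, I_re, I_im]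
  linear_combination ρ ^ 2 * Real.sin_sq_add_cos_sq φ + r ^ 2 * Real.sin_sq_add_cos_sq β

theorem norm_polarCoord_symm_sub_le_iff {r ρ : ℝ} (φ β : ℝ) (hr : 0 ≤ r) (hρ : 0 < ρ) :
    ‖Complex.polarCoord.symm (ρ, φ) - r * exp (β * I)‖ ≤ r ↔
      ρ ≤ 2 * r * Real.cos (φ - β) := by
  rw [norm_def, Real.sqrt_le_left hr, normSq_polarCoord_symm_sub]
  constructor <;> intro h <;> nlinarith

theorem cos_two_mul_mul_sin_two_mul_sub (x : ℝ) :
    Real.cos (2 * x) * Real.sin (2 * x) - Real.cos x * Real.sin x =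
      Real.sin x * Real.cos (3 * x) := by
  rw [show 3 * x = 2 * x + x by ring, Real.cos_add, Real.sin_two_mul, Real.cos_two_mul]
  linear_combination 2 * Real.sin x * Real.cos x * Real.sin_sq_add_cos_sq x

theorem integral_min_cos_sq {α : ℝ} (h0 : 0 ≤ α) (hα : α ≤ π / 2) :
    ∫ φ in 0..2 * α, min (Real.cos φ) (Real.cos (2 * α - φ)) ^ 2 =
      α + Real.sin α * Real.cos (3 * α) := by
  have hcont : Continuous fun φ => min (Real.cos φ) (Real.cos (2 * α - φ)) ^ 2 := by fun_prop
  rw [← intervalIntegral.integral_add_adjacent_intervals (b := α)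
    (hcont.intervalIntegrable _ _) (hcont.intervalIntegrable _ _)]
  have left : ∫ φ in 0..α, min (Real.cos φ) (Real.cos (2 * α - φ)) ^ 2
      = ∫ φ in α..2 * α, Real.cos φ ^ 2 := by
    rw [intervalIntegral.integral_congr (g := fun φ => Real.cos (2 * α - φ) ^ 2),
      intervalIntegral.integral_comp_sub_left (fun φ => Real.cos φ ^ 2), sub_zero,
      show 2 * α - α = α by ring]
    intro φ hφ
    rw [uIcc_of_le h0] at hφ
    dsimp only
    rw [min_eq_right (Real.cos_le_cos_of_nonneg_of_le_pi hφ.1 (by linarith [hφ.1])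
      (by linarith [hφ.2]))]
  have right : ∫ φ in α..2 * α, min (Real.cos φ) (Real.cos (2 * α - φ)) ^ 2
      = ∫ φ in α..2 * α, Real.cos φ ^ 2 := by
    refine intervalIntegral.integral_congr fun φ hφ => ?_
    rw [uIcc_of_le (by linarith)] at hφ
    rw [min_eq_left (Real.cos_le_cos_of_nonneg_of_le_pi (by linarith [hφ.2]) (by linarith [hφ.2])
      (by linarith [hφ.1]))]
  rw [left, right, integral_cos_sq]
  linear_combination cos_two_mul_mul_sin_two_mul_sub α

theorem setLIntegral_Ioc_zero_ofReal {c : ℝ} (hc : 0 ≤ c) :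
    ∫⁻ x in Ioc 0 c, ENNReal.ofReal x = ENNReal.ofReal (c ^ 2 / 2) := by
  have hint : IntegrableOn (fun x : ℝ => x) (Ioc 0 c) :=
    (intervalIntegrable_iff_integrableOn_Ioc_of_le hc).mp intervalIntegral.intervalIntegrable_id
  rw [← ofReal_integral_eq_lintegral_ofReal hint
    ((ae_restrict_iff' measurableSet_Ioc).mpr (ae_of_all _ fun x hx => hx.1.le)),
    ← intervalIntegral.integral_of_le hc, integral_id]
  ring_nf

theorem volume_eq_setLIntegral_of_polar {S : Set ℂ} (hS : MeasurableSet S) {a b : ℝ}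
    (ha : -π < a) (hb : b < π) {f : ℝ → ℝ} (hf : Measurable f)
    (hf₀ : ∀ φ ∈ Icc a b, 0 ≤ f φ)
    (hS_polar : ∀ ρ φ, 0 < ρ → φ ∈ Ioo (-π) π →
      (Complex.polarCoord.symm (ρ, φ) ∈ S ↔ φ ∈ Icc a b ∧ ρ ≤ f φ)) :
    volume S = ∫⁻ φ in Icc a b, ENNReal.ofReal (f φ ^ 2 / 2) := by
  set T : Set (ℝ × ℝ) := {p | p.2 ∈ Icc a b ∧ p.1 ∈ Ioc 0 (f p.2)}
  have hT : MeasurableSet T :=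
    (measurableSet_Icc.preimage measurable_snd).inter
      ((measurableSet_lt measurable_const measurable_fst).inter
        (measurableSet_le measurable_fst (hf.comp measurable_snd)))
  have hT_target : T ⊆ Complex.polarCoord.target := fun p ⟨hφ, hρ⟩ =>
    ⟨hρ.1, ha.trans_le hφ.1, hφ.2.trans_lt hb⟩
  have hslice : ∀ φ, ∫⁻ ρ, T.indicator (fun p => ENNReal.ofReal p.1) (ρ, φ) =
      (Icc a b).indicator (fun φ => ENNReal.ofReal (f φ ^ 2 / 2)) φ := by
    intro φ
    by_cases hφ : φ ∈ Icc a b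
    · have : (fun ρ => T.indicator (fun p => ENNReal.ofReal p.1) (ρ, φ)) =
          (Ioc 0 (f φ)).indicator ENNReal.ofReal := by
        ext ρ
        simp only [T, indicator_apply, mem_ofPred_eq, hφ, true_and]
      rw [this, lintegral_indicator measurableSet_Ioc, setLIntegral_Ioc_zero_ofReal (hf₀ φ hφ),
        indicator_of_mem hφ]
    · simp only [T, indicator_apply, mem_ofPred_eq, hφ, false_and, if_false, lintegral_zero]
  calc volume S = ∫⁻ z, S.indicator 1 z := (lintegral_indicator_one hS).symm
    _ = ∫⁻ p in Complex.polarCoord.target,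
          ENNReal.ofReal p.1 • S.indicator 1 (Complex.polarCoord.symm p) :=
        (Complex.lintegral_comp_polarCoord_symm _).symm
    _ = ∫⁻ p in Complex.polarCoord.target, T.indicator (fun p => ENNReal.ofReal p.1) p := by
        refine setLIntegral_congr_fun Complex.polarCoord.open_target.measurableSet
          fun p ⟨hρ, hφ⟩ => ?_
        have := hS_polar p.1 p.2 hρ hφ
        by_cases h : p ∈ T <;> simp_all [T, indicator_apply]
    _ = ∫⁻ p, T.indicator (fun p => ENNReal.ofReal p.1) p := by
        rw [lintegral_indicator hT, lintegral_indicator hT, Measure.restrict_restrict hT,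
          inter_eq_left.mpr hT_target]
    _ = ∫⁻ φ, ∫⁻ ρ, T.indicator (fun p => ENNReal.ofReal p.1) (ρ, φ) := by
        rw [Measure.volume_eq_prod]
        exact lintegral_prod_symm' _ ((ENNReal.measurable_ofReal.comp measurable_fst).indicator hT)
    _ = ∫⁻ φ in Icc a b, ENNReal.ofReal (f φ ^ 2 / 2) := by
        simp_rw [hslice]
        exact lintegral_indicator measurableSet_Icc _

def petal (r θ : ℝ) : Set ℂ :=
  {z | ‖z - r‖ ≤ r ∧ ‖z - r * exp (θ * I)‖ ≤ r ∧ (z = 0 ∨ (0 ≤ z.arg ∧ z.arg ≤ θ))}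

theorem polarCoord_symm_mem_petal_iff {r θ ρ φ : ℝ} (hr : 0 ≤ r) (hρ : 0 < ρ)
    (hφ : φ ∈ Ioo (-π) π) :
    Complex.polarCoord.symm (ρ, φ) ∈ petal r θ ↔
      φ ∈ Icc 0 θ ∧ ρ ≤ 2 * r * min (Real.cos φ) (Real.cos (θ - φ)) := by
  have harg : (Complex.polarCoord.symm (ρ, φ)).arg = φ := by
    simpa only [Complex.polarCoord_apply] using
      congrArg Prod.snd (Complex.polarCoord.right_inv (x := (ρ, φ)) ⟨hρ, hφ⟩)
  have hne : Complex.polarCoord.symm (ρ, φ) ≠ 0 := by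
    rw [← norm_ne_zero_iff, norm_polarCoord_symm, abs_of_pos hρ]
    exact hρ.ne'
  have hdisk₀ := norm_polarCoord_symm_sub_le_iff φ 0 hr hρ
  have hdisk := norm_polarCoord_symm_sub_le_iff φ θ hr hρ
  rw [ofReal_zero, zero_mul, Complex.exp_zero, mul_one, sub_zero] at hdisk₀
  rw [← Real.cos_neg, neg_sub] at hdisk
  rw [petal, mem_ofPred_eq, hdisk₀, hdisk, harg, mul_min_of_nonneg _ _ (by positivity),
    le_min_iff]
  simp only [hne, false_or, mem_Icc]
  tauto

theorem measurableSet_petal (r θ : ℝ) : MeasurableSet (petal r θ) := by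
  have hdisk : ∀ c : ℂ, MeasurableSet {z : ℂ | ‖z - c‖ ≤ r} := fun c =>
    measurableSet_le (by fun_prop) measurable_const
  exact (hdisk _).inter ((hdisk _).inter ((measurableSet_singleton 0).union
    ((measurableSet_le measurable_const measurable_arg).inter
      (measurableSet_le measurable_arg measurable_const))))

theorem volume_petal {r α : ℝ} (hr : 0 ≤ r) (hα₀ : 0 ≤ α) (hα : α ≤ π / 4) :
    volume (petal r (2 * α)) =
      ENNReal.ofReal (2 * r ^ 2 * (α + Real.sin α * Real.cos (3 * α))) := by
  set m : ℝ → ℝ := fun φ => 2 * r * min (Real.cos φ) (Real.cos (2 * α - φ)) with hm_def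
  have hm : Continuous m := by fun_prop
  have hm₀ : ∀ φ ∈ Icc 0 (2 * α), 0 ≤ m φ := fun φ hφ =>
    mul_nonneg (by positivity) (le_min
      (Real.cos_nonneg_of_mem_Icc ⟨by linarith [pi_pos, hφ.1], by linarith [hφ.2]⟩)
      (Real.cos_nonneg_of_mem_Icc ⟨by linarith [pi_pos, hφ.2], by linarith [hφ.1]⟩))
  have hm_sq : Continuous fun φ => m φ ^ 2 / 2 := by fun_prop
  rw [volume_eq_setLIntegral_of_polar (measurableSet_petal r _) (by linarith [pi_pos])
      (by linarith [pi_pos]) hm.measurable hm₀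
      fun ρ φ hρ hφ => polarCoord_symm_mem_petal_iff hr hρ hφ,
    ← ofReal_integral_eq_lintegral_ofReal hm_sq.integrableOn_Icc
      (ae_of_all _ fun φ => by positivity),
    integral_Icc_eq_integral_Ioc, ← intervalIntegral.integral_of_le (by linarith),
    ← integral_min_cos_sq hα₀ (by linarith), ← intervalIntegral.integral_const_mul]
  congr 1
  refine intervalIntegral.integral_congr fun φ _ => ?_
  simp only [hm_def]
  ring

/-- the Foss–Zuyev petal of radius r — the intersection of the two
disks of radius r centered at the polar points (r, 0) and (r, 2π/7) with the
angular sector between the rays φ = 0 and φ = 2π/7 — has Lebesgue area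
2r²(π/7 + sin(π/7)cos(3π/7)). -/
theorem foss_zuyev_petal_area (r : ℝ) (hr : 0 < r) :
    volume {z : ℂ |
        ‖z - (r : ℂ)‖ ≤ r ∧
        ‖z - (r : ℂ) * Complex.exp ((2 * π / 7 : ℝ) * Complex.I)‖ ≤ r ∧
        (z = 0 ∨ (0 ≤ z.arg ∧ z.arg ≤ 2 * π / 7))} =
      ENNReal.ofReal (2 * r ^ 2 * (π / 7 + Real.sin (π / 7) * Real.cos (3 * π / 7))) := by
  have h := volume_petal hr.le (α := π / 7) (by positivity) (by linarith [pi_pos])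
  rw [show 2 * (π / 7) = 2 * π / 7 by ring, show 3 * (π / 7) = 3 * π / 7 by ring] at h
  exact h
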